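/- Let Π be a reversible Markov kernel on (X,𝓔) with finite reversing measure m, and let κ be its Cheeger constant. If g ∈ L²(X,m) takes values in [0,∞) and m({x : g(x) > 0}) ≤ m(X)/2, then 𝓔₂(g) ≥ (κ²/2)·‖g‖²_{m,2}. -/

import Mathlib

open MeasureTheory ProbabilityTheory ENNReal

noncomputable section

/-- The `m`-size of the boundary of `A` with respect to the Markov kernel `Π`:
`|∂_Π A|_m = ∫_A Π(x, X∖A) dm(x)`. -/
def boundarySize {X : Type*} [MeasurableSpace X] (K : Kernel X X) (m : Measure X)
    (A : Set X) : ℝ :=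
  (∫⁻ x in A, K x Aᶜ ∂m).toReal

/-- The Cheeger constant of the Markov kernel `Π` with respect to `m`:
`κ = inf { |∂_Π A|_m / m(A) : A measurable, 0 < m(A) ≤ m(X)/2 }`. -/
def cheegerConst {X : Type*} [MeasurableSpace X] (K : Kernel X X) (m : Measure X) : ℝ :=
  sInf { q : ℝ | ∃ A : Set X, MeasurableSet A ∧ 0 < m A ∧ m A ≤ m Set.univ / 2 ∧
    q = boundarySize K m A / (m A).toReal }


/-- The `2`-Dirichlet energy `𝓔₂(f) = (1/2) ∫_{X×X} |f(x) − f(y)|² dμ(x,y)` where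
`μ = m ⊗ₘ K` is the measure on `X × X` determined by `μ(A×B) = ∫_A K(x,B) dm(x)`. -/
def dirichletEnergy2 {X : Type*} [MeasurableSpace X] (K : Kernel X X) (m : Measure X)
    (f : X → ℝ) : ℝ :=
  (1 / 2) * ∫ p, (f p.1 - f p.2) ^ 2 ∂(m.compProd K)

/-! For `f ≥ 0` the co-area formula
`∫₀^∞ μ({f > t} × {f ≤ t}) dt = ∫ (f(x) - f(y))⁺ dμ(x, y)`, `μ = m ⊗ Π`, together with the
Cheeger bound `κ m({f > t}) ≤ μ({f > t} × {f ≤ t})` for each superlevel set gives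
`κ ∫ f dm ≤ ∫ (f(x) - f(y))⁺ dμ` whenever `m({f > 0}) ≤ m(X)/2`. Apply this to `f = g²`.
Reversibility makes `μ` symmetric, so twice the right-hand side is
`∫ |g(x) - g(y)| (g(x) + g(y)) dμ`, and Cauchy–Schwarz with `∫ (g(x) + g(y))² dμ ≤ 4 ‖g‖²`
bounds it by `2 (2 𝓔₂(g))^{1/2} ‖g‖`. -/

open Set

lemma sq_lintegral_mul_le {α : Type*} [MeasurableSpace α] (μ : Measure α) {f h : α → ℝ≥0∞}
    (hf : AEMeasurable f μ) (hh : AEMeasurable h μ) :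
    (∫⁻ a, f a * h a ∂μ) ^ 2 ≤ (∫⁻ a, f a ^ 2 ∂μ) * ∫⁻ a, h a ^ 2 ∂μ := by
  have hCS := ENNReal.lintegral_mul_le_Lp_mul_Lq μ Real.HolderConjugate.two_two hf hh
  simp only [ENNReal.rpow_two, Pi.mul_apply] at hCS
  calc (∫⁻ a, f a * h a ∂μ) ^ 2
      ≤ ((∫⁻ a, f a ^ 2 ∂μ) ^ (1 / 2 : ℝ) * (∫⁻ a, h a ^ 2 ∂μ) ^ (1 / 2 : ℝ)) ^ 2 := by gcongr
    _ = (∫⁻ a, f a ^ 2 ∂μ) * ∫⁻ a, h a ^ 2 ∂μ := by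
        rw [mul_pow, ← ENNReal.rpow_natCast, ← ENNReal.rpow_natCast, ← ENNReal.rpow_mul,
          ← ENNReal.rpow_mul]
        norm_num

section PairMeasure

variable {Y : Type*} [MeasurableSpace Y] {μ : Measure (Y × Y)}

lemma lintegral_measure_superlevel_prod_compl [SFinite μ] {f : Y → ℝ} (hf : Measurable f)
    (hf0 : ∀ y, 0 ≤ f y) :
    ∫⁻ t in Ioi 0, μ ({y | t < f y} ×ˢ {y | t < f y}ᶜ)
      = ∫⁻ p, ENNReal.ofReal (f p.1 - f p.2) ∂μ := by
  set S : Set (ℝ × (Y × Y)) := {q | q.1 < f q.2.1 ∧ f q.2.2 ≤ q.1}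
  have hS : MeasurableSet S :=
    (measurableSet_lt measurable_fst (hf.comp (measurable_fst.comp measurable_snd))).inter
      (measurableSet_le (hf.comp (measurable_snd.comp measurable_snd)) measurable_fst)
  have hslice : ∀ p : Y × Y, (fun t => (t, p)) ⁻¹' S = Ico (f p.2) (f p.1) := by
    intro p
    ext t
    simp [S, and_comm]
  have hvol : ∀ p : Y × Y, volume.restrict (Ioi 0) (Ico (f p.2) (f p.1))
      = ENNReal.ofReal (f p.1 - f p.2) := by
    intro p
    rw [Measure.restrict_apply measurableSet_Ico]
    refine le_antisymm ((measure_mono inter_subset_left).trans_eq Real.volume_Ico) ?_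
    rw [← Real.volume_Ioo]
    exact measure_mono fun t ht => ⟨Ioo_subset_Ico_self ht, (hf0 p.2).trans_lt ht.1⟩
  calc ∫⁻ t in Ioi 0, μ ({y | t < f y} ×ˢ {y | t < f y}ᶜ)
      = ((volume.restrict (Ioi 0)).prod μ) S := by
        rw [Measure.prod_apply hS]
        congr 1 with t
        congr 1 with p
        simp [S]
    _ = ∫⁻ p, ENNReal.ofReal (f p.1 - f p.2) ∂μ := by
        simp_rw [Measure.prod_apply_symm hS, hslice, hvol]

lemma lintegral_ofReal_abs_sub_eq_two_mul (hμ : μ.map Prod.swap = μ) {f : Y → ℝ}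
    (hf : Measurable f) :
    ∫⁻ p, ENNReal.ofReal |f p.1 - f p.2| ∂μ
      = 2 * ∫⁻ p, ENNReal.ofReal (f p.1 - f p.2) ∂μ := by
  have hswap : ∫⁻ p, ENNReal.ofReal (f p.2 - f p.1) ∂μ
      = ∫⁻ p, ENNReal.ofReal (f p.1 - f p.2) ∂μ := by
    conv_lhs => rw [← hμ]
    exact lintegral_map (by fun_prop) measurable_swap
  have hpos_add_neg : ∀ a b : ℝ,
      ENNReal.ofReal |a - b| = ENNReal.ofReal (a - b) + ENNReal.ofReal (b - a) := by
    intro a b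
    rcases le_total a b with h | h
    · rw [abs_of_nonpos (sub_nonpos.2 h), neg_sub, ENNReal.ofReal_of_nonpos (sub_nonpos.2 h),
        zero_add]
    · rw [abs_of_nonneg (sub_nonneg.2 h), ENNReal.ofReal_of_nonpos (sub_nonpos.2 h), add_zero]
  simp_rw [hpos_add_neg]
  rw [lintegral_add_left (by fun_prop), hswap, two_mul]

lemma lintegral_ofReal_sq_add_le {u v : Y → ℝ} (hu : Measurable u) (hv : Measurable v) :
    ∫⁻ p, ENNReal.ofReal ((u p.1 + v p.2) ^ 2) ∂μ
      ≤ 2 * ∫⁻ x, ENNReal.ofReal (u x ^ 2) ∂μ.fst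
        + 2 * ∫⁻ x, ENNReal.ofReal (v x ^ 2) ∂μ.snd := by
  have hpt : ∀ a b : ℝ,
      ENNReal.ofReal ((a + b) ^ 2) ≤ 2 * ENNReal.ofReal (a ^ 2) + 2 * ENNReal.ofReal (b ^ 2) := by
    intro a b
    rw [← ENNReal.ofReal_ofNat 2, ← ENNReal.ofReal_mul zero_le_two,
      ← ENNReal.ofReal_mul zero_le_two, ← ENNReal.ofReal_add (by positivity) (by positivity)]
    exact ENNReal.ofReal_le_ofReal (by nlinarith [sq_nonneg (a - b)])
  calc ∫⁻ p, ENNReal.ofReal ((u p.1 + v p.2) ^ 2) ∂μ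
      ≤ ∫⁻ p, (2 * ENNReal.ofReal (u p.1 ^ 2) + 2 * ENNReal.ofReal (v p.2 ^ 2)) ∂μ :=
        lintegral_mono fun p => hpt _ _
    _ = 2 * ∫⁻ x, ENNReal.ofReal (u x ^ 2) ∂μ.fst
          + 2 * ∫⁻ x, ENNReal.ofReal (v x ^ 2) ∂μ.snd := by
        rw [lintegral_add_left (by fun_prop), lintegral_const_mul _ (by fun_prop),
          lintegral_const_mul _ (by fun_prop), Measure.fst, Measure.snd,
          lintegral_map (by fun_prop) measurable_fst, lintegral_map (by fun_prop) measurable_snd]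

end PairMeasure

section MarkovKernel

variable {X : Type*} [MeasurableSpace X] {K : Kernel X X} {m : Measure X}

variable (K m) in
lemma cheegerConst_nonneg : 0 ≤ cheegerConst K m := by
  apply Real.sInf_nonneg
  rintro q ⟨A, -, -, -, rfl⟩
  exact div_nonneg ENNReal.toReal_nonneg ENNReal.toReal_nonneg

lemma cheegerConst_le_boundarySize_div {A : Set X} (hA : MeasurableSet A) (hA0 : 0 < m A)
    (hA2 : m A ≤ m univ / 2) : cheegerConst K m ≤ boundarySize K m A / (m A).toReal := by
  refine csInf_le ⟨0, ?_⟩ ⟨A, hA, hA0, hA2, rfl⟩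
  rintro q ⟨B, -, -, -, rfl⟩
  exact div_nonneg ENNReal.toReal_nonneg ENNReal.toReal_nonneg

lemma ofReal_cheegerConst_mul_le_compProd_prod_compl [IsFiniteKernel K] [IsFiniteMeasure m]
    {A : Set X} (hA : MeasurableSet A) (hA2 : m A ≤ m univ / 2) :
    ENNReal.ofReal (cheegerConst K m) * m A ≤ m.compProd K (A ×ˢ Aᶜ) := by
  rcases eq_zero_or_pos (m A) with hA0 | hA0
  · simp [hA0]
  have hκ := (le_div_iff₀ (ENNReal.toReal_pos hA0.ne' (measure_ne_top m A))).1
    (cheegerConst_le_boundarySize_div (K := K) hA hA0 hA2)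
  rw [boundarySize, ← Measure.compProd_apply_prod hA hA.compl] at hκ
  rw [← ENNReal.ofReal_toReal (measure_ne_top m A),
    ← ENNReal.ofReal_mul (cheegerConst_nonneg K m),
    ← ENNReal.ofReal_toReal (measure_ne_top (m.compProd K) (A ×ˢ Aᶜ))]
  exact ENNReal.ofReal_le_ofReal hκ

theorem ofReal_cheegerConst_mul_lintegral_le [IsFiniteKernel K] [IsFiniteMeasure m]
    {f : X → ℝ} (hf : Measurable f) (hf0 : ∀ x, 0 ≤ f x)
    (hsupp : m {x | 0 < f x} ≤ m univ / 2) :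
    ENNReal.ofReal (cheegerConst K m) * ∫⁻ x, ENNReal.ofReal (f x) ∂m
      ≤ ∫⁻ p, ENNReal.ofReal (f p.1 - f p.2) ∂(m.compProd K) := by
  rw [lintegral_eq_lintegral_meas_lt m (ae_of_all _ hf0) hf.aemeasurable,
    ← lintegral_const_mul' _ _ ENNReal.ofReal_ne_top,
    ← lintegral_measure_superlevel_prod_compl hf hf0]
  refine setLIntegral_mono' measurableSet_Ioi fun t (ht : 0 < t) => ?_
  refine ofReal_cheegerConst_mul_le_compProd_prod_compl (measurableSet_lt measurable_const hf) ?_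
  exact (measure_mono fun x (hx : t < f x) => ht.trans hx).trans hsupp

lemma ProbabilityTheory.Kernel.isReversible_of_integral_mul_comm [IsFiniteKernel K]
    [IsFiniteMeasure m]
    (hrev : ∀ f g : X → ℝ, Measurable f → Measurable g →
      (∃ C, ∀ x, |f x| ≤ C) → (∃ C, ∀ x, |g x| ≤ C) →
      ∫ x, f x * (∫ y, g y ∂(K x)) ∂m = ∫ x, (∫ y, f y ∂(K x)) * g x ∂m) :
    Kernel.IsReversible K m := by
  intro A B hA hB
  have hbdd : ∀ s : Set X, ∃ C, ∀ x, |s.indicator (1 : X → ℝ) x| ≤ C := fun s =>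
    ⟨1, fun x => by by_cases hx : x ∈ s <;> simp [hx]⟩
  have h := hrev _ _ (measurable_one.indicator hA) (measurable_one.indicator hB) (hbdd A) (hbdd B)
  have hind : ∀ (s : Set X) (F : X → ℝ), MeasurableSet s →
      ∫ x, s.indicator 1 x * F x ∂m = ∫ x in s, F x ∂m := fun s F hs => by
    rw [← integral_indicator hs]
    congr with x
    by_cases hx : x ∈ s <;> simp [hx]
  simp only [integral_indicator_one hA, integral_indicator_one hB, mul_comm _ (B.indicator 1 _),
    hind A _ hA, hind B _ hB, measureReal_def] at h
  rw [integral_toReal (K.measurable_coe hB).aemeasurable (ae_of_all _ fun x => measure_lt_top _ _),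
    integral_toReal (K.measurable_coe hA).aemeasurable (ae_of_all _ fun x => measure_lt_top _ _)]
    at h
  have hfin : ∀ {s t : Set X}, MeasurableSet s → MeasurableSet t → ∫⁻ x in s, K x t ∂m ≠ ⊤ :=
    fun hs ht => by rw [← Measure.compProd_apply_prod hs ht]; exact measure_ne_top _ _
  exact (ENNReal.toReal_eq_toReal_iff' (hfin hA hB) (hfin hB hA)).1 h

lemma ProbabilityTheory.Kernel.IsReversible.map_swap_compProd [IsFiniteKernel K]
    [IsFiniteMeasure m] (hK : Kernel.IsReversible K m) :
    (m.compProd K).map Prod.swap = m.compProd K := by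
  refine Measure.ext_prod fun {A B} hA hB => ?_
  rw [Measure.map_apply measurable_swap (hA.prod hB), preimage_swap_prod,
    Measure.compProd_apply_prod hB hA, Measure.compProd_apply_prod hA hB, hK hB hA]

lemma ProbabilityTheory.Kernel.IsReversible.snd_compProd [IsMarkovKernel K] [IsFiniteMeasure m]
    (hK : Kernel.IsReversible K m) : (m.compProd K).snd = m := by
  rw [← Measure.fst_map_swap, hK.map_swap_compProd, Measure.fst_compProd]

theorem ofReal_cheegerConst_sq_mul_lintegral_le [IsMarkovKernel K] [IsFiniteMeasure m]
    (hK : Kernel.IsReversible K m) {g : X → ℝ} (hg : Measurable g) (hg0 : ∀ x, 0 ≤ g x)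
    (hI : ∫⁻ x, ENNReal.ofReal (g x ^ 2) ∂m ≠ ⊤) (hsupp : m {x | 0 < g x} ≤ m univ / 2) :
    ENNReal.ofReal (cheegerConst K m) ^ 2 * ∫⁻ x, ENNReal.ofReal (g x ^ 2) ∂m
      ≤ ∫⁻ p, ENNReal.ofReal ((g p.1 - g p.2) ^ 2) ∂(m.compProd K) := by
  set κ := ENNReal.ofReal (cheegerConst K m)
  set I := ∫⁻ x, ENNReal.ofReal (g x ^ 2) ∂m
  set E := ∫⁻ p, ENNReal.ofReal ((g p.1 - g p.2) ^ 2) ∂(m.compProd K)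
  rcases eq_zero_or_pos I with hI0 | hI0
  · simp [hI0]
  have hsupp_sq : {x | 0 < g x ^ 2} = {x | 0 < g x} := by
    ext x
    simp only [mem_ofPred_eq, sq_pos_iff, (hg0 x).lt_iff_ne']
  have hL1 : κ * I ≤ ∫⁻ p, ENNReal.ofReal (g p.1 ^ 2 - g p.2 ^ 2) ∂(m.compProd K) :=
    ofReal_cheegerConst_mul_lintegral_le (hg.pow_const 2) (fun x => sq_nonneg _)
      (hsupp_sq ▸ hsupp)
  have hsum : ∫⁻ p, ENNReal.ofReal ((g p.1 + g p.2) ^ 2) ∂(m.compProd K) ≤ 4 * I := by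
    have := lintegral_ofReal_sq_add_le (μ := m.compProd K) hg hg
    rw [Measure.fst_compProd, hK.snd_compProd] at this
    exact this.trans_eq (by ring)
  have hCS : (2 * ∫⁻ p, ENNReal.ofReal (g p.1 ^ 2 - g p.2 ^ 2) ∂(m.compProd K)) ^ 2
      ≤ E * ∫⁻ p, ENNReal.ofReal ((g p.1 + g p.2) ^ 2) ∂(m.compProd K) := by
    have hfactor : ∀ p : X × X, ENNReal.ofReal |g p.1 ^ 2 - g p.2 ^ 2|
        = ENNReal.ofReal |g p.1 - g p.2| * ENNReal.ofReal (g p.1 + g p.2) := by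
      intro p
      rw [← ENNReal.ofReal_mul (abs_nonneg _), sq_sub_sq, abs_mul,
        abs_of_nonneg (add_nonneg (hg0 _) (hg0 _)), mul_comm]
    have hsq : ∀ a : ℝ, ENNReal.ofReal |a| ^ 2 = ENNReal.ofReal (a ^ 2) := fun a => by
      rw [← ENNReal.ofReal_pow (abs_nonneg a), sq_abs]
    rw [← lintegral_ofReal_abs_sub_eq_two_mul hK.map_swap_compProd (hg.pow_const 2)]
    simp_rw [hfactor]
    convert sq_lintegral_mul_le (m.compProd K) (f := fun p => ENNReal.ofReal |g p.1 - g p.2|)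
      (h := fun p => ENNReal.ofReal (g p.1 + g p.2)) (by fun_prop) (by fun_prop) using 4 with p p
    · exact (hsq _).symm
    · rw [← hsq, abs_of_nonneg (add_nonneg (hg0 _) (hg0 _))]
  have hkey : κ ^ 2 * I * (4 * I) ≤ E * (4 * I) :=
    calc κ ^ 2 * I * (4 * I) = (2 * (κ * I)) ^ 2 := by ring
      _ ≤ (2 * ∫⁻ p, ENNReal.ofReal (g p.1 ^ 2 - g p.2 ^ 2) ∂(m.compProd K)) ^ 2 := by gcongr
      _ ≤ E * (4 * I) := hCS.trans (by gcongr)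
  exact (ENNReal.mul_le_mul_iff_left (by positivity) (ENNReal.mul_ne_top (by simp) hI)).1 hkey

lemma ProbabilityTheory.Kernel.IsReversible.dirichletEnergy2_congr_ae [IsMarkovKernel K]
    [IsFiniteMeasure m] (hK : Kernel.IsReversible K m) {g g' : X → ℝ} (h : g =ᵐ[m] g') :
    dirichletEnergy2 K m g = dirichletEnergy2 K m g' := by
  have h₁ : g ∘ Prod.fst =ᵐ[m.compProd K] g' ∘ Prod.fst :=
    ae_eq_comp measurable_fst.aemeasurable (by rwa [← Measure.fst, Measure.fst_compProd])
  have h₂ : g ∘ Prod.snd =ᵐ[m.compProd K] g' ∘ Prod.snd :=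
    ae_eq_comp measurable_snd.aemeasurable (by rwa [← Measure.snd, hK.snd_compProd])
  rw [dirichletEnergy2, dirichletEnergy2, integral_congr_ae]
  filter_upwards [h₁, h₂] with p hp₁ hp₂
  simp only [Function.comp_apply] at hp₁ hp₂
  rw [hp₁, hp₂]

theorem cheegerConst_sq_div_two_mul_integral_le [IsMarkovKernel K] [IsFiniteMeasure m]
    (hK : Kernel.IsReversible K m) {g : X → ℝ} (hg : Measurable g) (hg2 : MemLp g 2 m)
    (hg0 : ∀ x, 0 ≤ g x) (hsupp : m {x | 0 < g x} ≤ m univ / 2) :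
    (cheegerConst K m ^ 2 / 2) * ∫ x, g x ^ 2 ∂m ≤ dirichletEnergy2 K m g := by
  have hfst : MeasurePreserving Prod.fst (m.compProd K) m :=
    ⟨measurable_fst, Measure.fst_compProd m K⟩
  have hsnd : MeasurePreserving Prod.snd (m.compProd K) m := ⟨measurable_snd, hK.snd_compProd⟩
  have hI := ofReal_integral_eq_lintegral_ofReal hg2.integrable_sq
    (ae_of_all _ fun x => sq_nonneg (g x))
  have hE := ofReal_integral_eq_lintegral_ofReal
    ((hg2.comp_measurePreserving hfst).sub (hg2.comp_measurePreserving hsnd)).integrable_sq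
    (ae_of_all _ fun p => sq_nonneg (g p.1 - g p.2))
  simp only [Function.comp_apply, Pi.sub_apply] at hE
  suffices cheegerConst K m ^ 2 * ∫ x, g x ^ 2 ∂m ≤ ∫ p, (g p.1 - g p.2) ^ 2 ∂(m.compProd K) by
    rw [dirichletEnergy2]
    linarith
  rw [← ENNReal.ofReal_le_ofReal_iff (integral_nonneg fun p => sq_nonneg _),
    ENNReal.ofReal_mul (sq_nonneg _), ENNReal.ofReal_pow (cheegerConst_nonneg K m), hI, hE]
  exact ofReal_cheegerConst_sq_mul_lintegral_le hK hg hg0 (hI ▸ ENNReal.ofReal_ne_top) hsupp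

end MarkovKernel

/-- **Lemma 3.6.** Let `K` be a reversible Markov kernel on `X` with finite
reversing measure `m` and Cheeger constant `κ`. If `g ∈ L²(X,m)` takes values in `[0,∞)`
and `m({g > 0}) ≤ m(X)/2`, then `𝓔₂(g) ≥ (κ²/2)·‖g‖²_{m,2}`. -/
theorem dirichlet_two_ge_cheeger_sq {X : Type*} [MeasurableSpace X]
    (K : Kernel X X) [IsMarkovKernel K] (m : Measure X) [IsFiniteMeasure m]
    (hrev : ∀ f g : X → ℝ, Measurable f → Measurable g →
      (∃ C, ∀ x, |f x| ≤ C) → (∃ C, ∀ x, |g x| ≤ C) →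
      ∫ x, f x * (∫ y, g y ∂(K x)) ∂m = ∫ x, (∫ y, f y ∂(K x)) * g x ∂m)
    (g : X → ℝ) (hg : MemLp g 2 m) (hg0 : ∀ x, 0 ≤ g x)
    (hsupp : m {x | 0 < g x} ≤ m Set.univ / 2) :
    (cheegerConst K m ^ 2 / 2) * ∫ x, g x ^ 2 ∂m ≤ dirichletEnergy2 K m g := by
  have hK := Kernel.isReversible_of_integral_mul_comm hrev
  obtain ⟨g₁, hg₁, hg₁0, hgg₁⟩ := hg.1.aemeasurable.exists_measurable_nonneg (ae_of_all _ hg0)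
  have hsupp₁ : m {x | 0 < g₁ x} ≤ m univ / 2 :=
    (measure_congr (hgg₁.fun_comp (0 < ·))).symm.trans_le hsupp
  have hI : ∫ x, g x ^ 2 ∂m = ∫ x, g₁ x ^ 2 ∂m := integral_congr_ae (hgg₁.fun_comp (· ^ 2))
  rw [hI, hK.dirichletEnergy2_congr_ae hgg₁]
  exact cheegerConst_sq_div_two_mul_integral_le hK hg₁ (hg.ae_eq hgg₁) hg₁0 hsupp₁
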